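/- Iterated homoclinic channels and the explicit formula for the scattering map of a flow: Let Λ be a normally hyperbolic invariant manifold for the flow Φ and Γ a homoclinic channel with scattering map S^Γ. Then for any t_u, t_s > 0 the sets Φ^{−t_u}(Γ) and Φ^{t_s}(Γ) are also homoclinic channels, and the scattering map satisfies S^Γ = Φ^{−t_s} ∘ Ω_+^{Φ^{t_s}(Γ)} ∘ Φ^{t_s+t_u} ∘ (Ω_-^{Φ^{−t_u}(Γ)})^{-1} ∘ Φ^{−t_u}. -/

import Mathlib

noncomputable section

open Set Metric Function

/-- Euclidean space `ℝ^m`, our model for the `m`-dimensional manifold `M`. -/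
abbrev Euc (m : ℕ) : Type := EuclideanSpace ℝ (Fin m)

/-- The tangent space of a set `s` at a point `x`, defined as the linear span of the
tangent cone of `s` at `x`. -/
def tSpace {m : ℕ} (s : Set (Euc m)) (x : Euc m) : Submodule ℝ (Euc m) :=
  Submodule.span ℝ (tangentConeAt ℝ s x)

/-- `U` is a relatively open subset of `A`. -/
def relOpenIn {X : Type*} [TopologicalSpace X] (A U : Set X) : Prop :=
  ∃ V : Set X, IsOpen V ∧ U = V ∩ A
/-- A smooth flow on `ℝ^m`. -/
structure SmoothFlow (m : ℕ) where
  Φ : ℝ → Euc m → Euc m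
  flow_zero : ∀ x, Φ 0 x = x
  flow_add : ∀ s t x, Φ (s + t) x = Φ s (Φ t x)
  smooth : ContDiff ℝ 2 (fun p : ℝ × Euc m => Φ p.1 p.2)

/-- A normally hyperbolic invariant manifold `Λ` for a flow `Φ` on `ℝ^m`, together with all
its defining data: the invariant splitting `E^u ⊕ E^s ⊕ TΛ` and the rates `0 < β < α`. -/
structure FlowNHIM (m : ℕ) extends SmoothFlow m where
  Λ : Set (Euc m)
  compactΛ : IsCompact Λ
  connΛ : IsConnected Λ
  invΛ : ∀ t : ℝ, Φ t '' Λ = Λ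
  n : ℕ
  l : ℕ
  dim_eq : 2 * n + l = m
  Eu : Euc m → Submodule ℝ (Euc m)
  Es : Euc m → Submodule ℝ (Euc m)
  dimEu : ∀ x ∈ Λ, Module.finrank ℝ (Eu x) = n
  dimEs : ∀ x ∈ Λ, Module.finrank ℝ (Es x) = n
  dimT : ∀ x ∈ Λ, Module.finrank ℝ (tSpace Λ x) = l
  C : ℝ
  aRate : ℝ
  bRate : ℝ
  hC : 0 < C
  hb : 0 < bRate
  hba : bRate < aRate
  sup_eq_top : ∀ x ∈ Λ, Eu x ⊔ Es x ⊔ tSpace Λ x = ⊤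
  indep_u : ∀ x ∈ Λ, Eu x ⊓ (Es x ⊔ tSpace Λ x) = ⊥
  indep_s : ∀ x ∈ Λ, Es x ⊓ (Eu x ⊔ tSpace Λ x) = ⊥
  indep_c : ∀ x ∈ Λ, tSpace Λ x ⊓ (Eu x ⊔ Es x) = ⊥
  mapEu : ∀ t : ℝ, ∀ x ∈ Λ, (Eu x).map (fderiv ℝ (Φ t) x : Euc m →ₗ[ℝ] Euc m) = Eu (Φ t x)
  mapEs : ∀ t : ℝ, ∀ x ∈ Λ, (Es x).map (fderiv ℝ (Φ t) x : Euc m →ₗ[ℝ] Euc m) = Es (Φ t x)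
  charEs : ∀ x ∈ Λ, ∀ v : Euc m,
    v ∈ Es x ↔ ∀ t : ℝ, 0 ≤ t →
      ‖fderiv ℝ (Φ t) x v‖ ≤ C * Real.exp (-aRate * t) * ‖v‖
  charEu : ∀ x ∈ Λ, ∀ v : Euc m,
    v ∈ Eu x ↔ ∀ t : ℝ, t ≤ 0 →
      ‖fderiv ℝ (Φ t) x v‖ ≤ C * Real.exp (aRate * t) * ‖v‖
  charT : ∀ x ∈ Λ, ∀ v : Euc m,
    v ∈ tSpace Λ x ↔ ∀ t : ℝ,
      ‖fderiv ℝ (Φ t) x v‖ ≤ C * Real.exp (bRate * |t|) * ‖v‖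

namespace FlowNHIM

variable {m : ℕ}

/-- The stable manifold `W^s(Λ)` of `Λ` for the flow. -/
def Ws (D : FlowNHIM m) : Set (Euc m) :=
  {y | ∃ Cy > 0, ∀ t : ℝ, 0 ≤ t →
    Metric.infDist (D.Φ t y) D.Λ ≤ Cy * Real.exp (-D.aRate * t)}

/-- The unstable manifold `W^u(Λ)` of `Λ` for the flow. -/
def Wu (D : FlowNHIM m) : Set (Euc m) :=
  {y | ∃ Cy > 0, ∀ t : ℝ, t ≤ 0 →
    Metric.infDist (D.Φ t y) D.Λ ≤ Cy * Real.exp (D.aRate * t)}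

/-- The stable fiber `W^s(x)` of a point `x ∈ Λ`. -/
def WsF (D : FlowNHIM m) (x : Euc m) : Set (Euc m) :=
  {y | ∃ Cxy > 0, ∀ t : ℝ, 0 ≤ t →
    dist (D.Φ t y) (D.Φ t x) ≤ Cxy * Real.exp (-D.aRate * t)}

/-- The unstable fiber `W^u(x)` of a point `x ∈ Λ`. -/
def WuF (D : FlowNHIM m) (x : Euc m) : Set (Euc m) :=
  {y | ∃ Cxy > 0, ∀ t : ℝ, t ≤ 0 →
    dist (D.Φ t y) (D.Φ t x) ≤ Cxy * Real.exp (D.aRate * t)}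

/-- The vector field generating the flow. -/
def X (D : FlowNHIM m) (x : Euc m) : Euc m := deriv (fun t => D.Φ t x) 0

end FlowNHIM
/-- A homoclinic channel for a normally hyperbolic invariant manifold `Λ` with stable and
unstable manifolds `Wus`, `Wss` foliated by fibers `WuF`, `WsF`:  an `l`-dimensional
submanifold `Γ ⊆ W^u(Λ) ∩ W^s(Λ)` along which `W^u(Λ)` and `W^s(Λ)` intersect transversally,
satisfying the transverse foliation conditions, and on which the restricted wave maps
`Ω₋, Ω₊` are diffeomorphisms onto open subsets `U₋ = Um`, `U₊ = Up` of `Λ`. -/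
structure Channel (m : ℕ) (Λ Wus Wss : Set (Euc m))
    (WuF WsF : Euc m → Set (Euc m)) (l : ℕ) where
  Γ : Set (Euc m)
  sub : Γ ⊆ Wus ∩ Wss
  dimΓ : ∀ x ∈ Γ, Module.finrank ℝ (tSpace Γ x) = l
  Ωm : Euc m → Euc m
  Ωp : Euc m → Euc m
  footm : ∀ x ∈ Wus, Ωm x ∈ Λ ∧ x ∈ WuF (Ωm x)
  footm_uniq : ∀ x ∈ Wus, ∀ y ∈ Λ, x ∈ WuF y → y = Ωm x
  footp : ∀ x ∈ Wss, Ωp x ∈ Λ ∧ x ∈ WsF (Ωp x)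
  footp_uniq : ∀ x ∈ Wss, ∀ y ∈ Λ, x ∈ WsF y → y = Ωp x
  trans_sum : ∀ x ∈ Γ, tSpace Wus x ⊔ tSpace Wss x = ⊤
  trans_int : ∀ x ∈ Γ, tSpace Γ x = tSpace Wus x ⊓ tSpace Wss x
  fol_s : ∀ x ∈ Γ, tSpace Wss x = tSpace (WsF (Ωp x)) x ⊔ tSpace Γ x
  fol_s_indep : ∀ x ∈ Γ, tSpace (WsF (Ωp x)) x ⊓ tSpace Γ x = ⊥
  fol_u : ∀ x ∈ Γ, tSpace Wus x = tSpace (WuF (Ωm x)) x ⊔ tSpace Γ x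
  fol_u_indep : ∀ x ∈ Γ, tSpace (WuF (Ωm x)) x ⊓ tSpace Γ x = ⊥
  Um : Set (Euc m)
  Up : Set (Euc m)
  hUm : relOpenIn Λ Um
  hUp : relOpenIn Λ Up
  bijm : Set.BijOn Ωm Γ Um
  bijp : Set.BijOn Ωp Γ Up
  contm : ContinuousOn Ωm Γ
  contp : ContinuousOn Ωp Γ
  continvm : ContinuousOn (Function.invFunOn Ωm Γ) Um
  continvp : ContinuousOn (Function.invFunOn Ωp Γ) Up

/-- The scattering map `S^Γ = Ω₊^Γ ∘ (Ω₋^Γ)⁻¹ : U₋ → U₊` associated to a homoclinic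
channel. -/
def Channel.S {m : ℕ} {Λ Wus Wss : Set (Euc m)} {WuF WsF : Euc m → Set (Euc m)} {l : ℕ}
    (ch : Channel m Λ Wus Wss WuF WsF l) : Euc m → Euc m :=
  fun y => ch.Ωp (Function.invFunOn ch.Ωm ch.Γ y)
/-- A homoclinic channel for a flow. -/
abbrev FlowChannel {m : ℕ} (D : FlowNHIM m) :=
  Channel m D.Λ D.Wu D.Ws D.WuF D.WsF D.l

/-! The flow `Φ^s` is a diffeomorphism that maps `Λ`, `W^u(Λ)`, `W^s(Λ)` onto themselves and
each fibre `W^{u,s}(x)` onto `W^{u,s}(Φ^s x)`: shifting time only changes the constants in the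
exponential estimates. Conjugating a channel by such a symmetry yields a channel on the image of
`Γ`, which gives the iterated channels. By uniqueness of the footpoints, the wave maps of any
channel commute with `Φ^s` on `W^u(Λ)`, resp. `W^s(Λ)`, and the formula follows by chasing a point
`x ∈ Γ` through `Φ^{-t_u}(Γ)` and `Φ^{t_s}(Γ)`. -/

open scoped Manifold

section ExponentialBound

open Real

theorem exists_le_exp_comp_add {g : ℝ → ℝ} (hg : Continuous g) {a : ℝ} (ha : 0 ≤ a)
    (h : ∃ C > 0, ∀ t : ℝ, t ≤ 0 → g t ≤ C * exp (a * t)) (s : ℝ) :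
    ∃ C > 0, ∀ t : ℝ, t ≤ 0 → g (t + s) ≤ C * exp (a * t) := by
  obtain ⟨C, hC, hbound⟩ := h
  obtain ⟨M, hM⟩ := isCompact_Icc.bddAbove_image (hg.continuousOn (s := Icc 0 s))
  refine ⟨(C + |M|) * exp (a * s), by positivity, fun t ht => ?_⟩
  rw [mul_assoc, ← exp_add]
  rcases le_or_gt (t + s) 0 with hneg | hpos
  · calc g (t + s) ≤ C * exp (a * (t + s)) := hbound _ hneg
      _ ≤ (C + |M|) * exp (a * s + a * t) := by
        rw [mul_add, add_comm]; gcongr; exact le_add_of_nonneg_right (abs_nonneg M)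
  · -- for `-s < t ≤ 0` the argument `t + s` stays in the compact interval `[0, s]`
    have hgM : g (t + s) ≤ |M| :=
      (hM ⟨t + s, ⟨hpos.le, by linarith⟩, rfl⟩).trans (le_abs_self M)
    have hone : 1 ≤ exp (a * s + a * t) :=
      one_le_exp (by rw [← mul_add]; exact mul_nonneg ha (by linarith))
    calc g (t + s) ≤ |M| * 1 := by rwa [mul_one]
      _ ≤ (C + |M|) * exp (a * s + a * t) := by
        gcongr; exact le_add_of_nonneg_left hC.le

theorem exists_le_exp_comp_add_iff {g : ℝ → ℝ} (hg : Continuous g) {a : ℝ} (ha : 0 ≤ a)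
    (s : ℝ) :
    (∃ C > 0, ∀ t : ℝ, t ≤ 0 → g (t + s) ≤ C * exp (a * t)) ↔
      ∃ C > 0, ∀ t : ℝ, t ≤ 0 → g t ≤ C * exp (a * t) := by
  refine ⟨fun h => ?_, fun h => exists_le_exp_comp_add hg ha h s⟩
  simpa only [neg_add_cancel_right] using
    exists_le_exp_comp_add (g := fun u => g (u + s)) (hg.comp (continuous_add_const s)) ha h (-s)

theorem exists_le_exp_neg_comp_add_iff {g : ℝ → ℝ} (hg : Continuous g) {a : ℝ} (ha : 0 ≤ a)
    (s : ℝ) :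
    (∃ C > 0, ∀ t : ℝ, 0 ≤ t → g (t + s) ≤ C * exp (-a * t)) ↔
      ∃ C > 0, ∀ t : ℝ, 0 ≤ t → g t ≤ C * exp (-a * t) := by
  have hreflect : ∀ f : ℝ → ℝ, (∃ C > 0, ∀ t : ℝ, 0 ≤ t → f t ≤ C * exp (-a * t)) ↔
      ∃ C > 0, ∀ t : ℝ, t ≤ 0 → f (-t) ≤ C * exp (a * t) := fun f => by
    refine exists_congr fun C => and_congr_right fun _ => ⟨fun h t ht => ?_, fun h t ht => ?_⟩
    · simpa [mul_neg] using h (-t) (by linarith)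
    · simpa using h (-t) (by linarith)
  rw [hreflect, hreflect]
  simpa only [neg_add, neg_neg] using
    exists_le_exp_comp_add_iff (g := fun u => g (-u)) (hg.comp continuous_neg) ha (-s)

end ExponentialBound

section Footpoints

variable {α : Type*} {Λ W : Set α} {F : α → Set α}

theorem foot_map_eq {f Ω Ω' : α → α} (hΛ : MapsTo f Λ Λ) (hW : MapsTo f W W)
    (hF : ∀ x, MapsTo f (F x) (F (f x)))
    (hfoot : ∀ x ∈ W, Ω x ∈ Λ ∧ x ∈ F (Ω x))
    (huniq : ∀ x ∈ W, ∀ y ∈ Λ, x ∈ F y → y = Ω' x) {x : α} (hx : x ∈ W) :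
    Ω' (f x) = f (Ω x) :=
  (huniq _ (hW hx) _ (hΛ (hfoot x hx).1) (hF _ (hfoot x hx).2)).symm

variable {e : α ≃ α} {Ω : α → α}

theorem foot_conj (hΛ : e '' Λ = Λ) (hW : e '' W = W) (hF : ∀ x, e '' F x = F (e x))
    (hfoot : ∀ x ∈ W, Ω x ∈ Λ ∧ x ∈ F (Ω x)) :
    ∀ x ∈ W, e.conj Ω x ∈ Λ ∧ x ∈ F (e.conj Ω x) := by
  intro x hx
  obtain ⟨hΩΛ, hxF⟩ := hfoot (e.symm x) (by rwa [← mem_image_equiv, hW])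
  refine ⟨hΛ ▸ mem_image_of_mem e hΩΛ, ?_⟩
  rw [Equiv.conj_apply, ← hF, mem_image_equiv]
  exact hxF

theorem foot_uniq_conj (hΛ : e '' Λ = Λ) (hW : e '' W = W) (hF : ∀ x, e '' F x = F (e x))
    (huniq : ∀ x ∈ W, ∀ y ∈ Λ, x ∈ F y → y = Ω x) :
    ∀ x ∈ W, ∀ y ∈ Λ, x ∈ F y → y = e.conj Ω x := by
  intro x hx y hy hxy
  have hxy' : e.symm x ∈ F (e.symm y) := by
    rwa [← mem_image_equiv, hF, e.apply_symm_apply]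
  rw [Equiv.conj_apply, ← huniq _ (by rwa [← mem_image_equiv, hW]) _
    (by rwa [← mem_image_equiv, hΛ]) hxy', e.apply_symm_apply]

end Footpoints

section Conjugation

variable {α : Type*} {Γ U : Set α} {Ω : α → α}

theorem Set.BijOn.equiv_conj (e : α ≃ α) (h : BijOn Ω Γ U) :
    BijOn (e.conj Ω) (e '' Γ) (e '' U) := by
  have hsymm : BijOn e.symm (e '' Γ) Γ := by
    simpa only [e.symm_image_image] using e.symm.injective.injOn.bijOn_image (s := e '' Γ)
  exact (e.injective.injOn.bijOn_image.comp h).comp hsymm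

theorem Set.BijOn.invFunOn_conj_eqOn [Nonempty α] (e : α ≃ α) (h : BijOn Ω Γ U) :
    EqOn (invFunOn (e.conj Ω) (e '' Γ)) (e.conj (invFunOn Ω Γ)) (e '' U) := by
  rintro _ ⟨y, hy, rfl⟩
  have hmem : e.conj (invFunOn Ω Γ) (e y) ∈ e '' Γ := by
    rw [Equiv.conj_apply, e.symm_apply_apply]
    exact mem_image_of_mem e (h.surjOn.mapsTo_invFunOn hy)
  have hinv : e.conj Ω (e.conj (invFunOn Ω Γ) (e y)) = e y := by
    simp only [Equiv.conj_apply, e.symm_apply_apply, h.surjOn.rightInvOn_invFunOn hy]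
  rw [← (h.equiv_conj e).injOn.leftInvOn_invFunOn hmem, hinv]

end Conjugation

section HomeomorphConjugation

variable {X : Type*} [TopologicalSpace X] {Γ U : Set X} {Ω : X → X}

theorem ContinuousOn.homeomorph_conj (e : X ≃ₜ X) (h : ContinuousOn Ω Γ) :
    ContinuousOn (e.toEquiv.conj Ω) (e '' Γ) := by
  refine e.continuous.comp_continuousOn (h.comp e.symm.continuous.continuousOn ?_)
  rintro _ ⟨x, hx, rfl⟩
  simpa using hx

theorem relOpenIn_image_homeomorph (e : X ≃ₜ X) {A : Set X} (hA : e '' A = A)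
    (hU : relOpenIn A U) : relOpenIn A (e '' U) := by
  obtain ⟨V, hV, rfl⟩ := hU
  exact ⟨e '' V, e.isOpenMap V hV, by rw [image_inter e.injective, hA]⟩

end HomeomorphConjugation

section TangentSpace

variable {m : ℕ}

theorem tSpace_map_fderiv_le {f : Euc m → Euc m} {x : Euc m} (hf : DifferentiableAt ℝ f x)
    (A : Set (Euc m)) :
    (tSpace A x).map (fderiv ℝ f x : Euc m →ₗ[ℝ] Euc m) ≤ tSpace (f '' A) (f x) := by
  rw [tSpace, tSpace, Submodule.map_span]
  refine Submodule.span_mono ?_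
  rintro _ ⟨v, hv, rfl⟩
  exact hf.hasFDerivAt.hasFDerivWithinAt.mapsTo_tangent_cone hv

namespace Diffeomorph

variable (h : Euc m ≃ₘ^1⟮𝓘(ℝ, Euc m), 𝓘(ℝ, Euc m)⟯ Euc m)

theorem conj_apply_apply (f : Euc m → Euc m) (x : Euc m) :
    h.toEquiv.conj f (h x) = h (f x) := by
  simp

protected theorem differentiable : Differentiable ℝ h :=
  h.contDiff.differentiable one_ne_zero

theorem fderiv_symm_apply_fderiv (x v : Euc m) :
    fderiv ℝ h.symm (h x) (fderiv ℝ h x v) = v := by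
  have hcomp : h.symm ∘ h = id := funext h.symm_apply_apply
  rw [← ContinuousLinearMap.comp_apply, ← fderiv_comp x (h.symm.differentiable _)
    (h.differentiable x), hcomp, fderiv_id, ContinuousLinearMap.id_apply]

def fderivLinearEquiv (x : Euc m) : Euc m ≃ₗ[ℝ] Euc m :=
  LinearEquiv.ofInjectiveEndo (fderiv ℝ h x)
    (LeftInverse.injective (h.fderiv_symm_apply_fderiv x))

@[simp]
theorem fderivLinearEquiv_apply (x v : Euc m) : h.fderivLinearEquiv x v = fderiv ℝ h x v :=
  rfl

theorem tSpace_image {A B : Set (Euc m)} (hAB : h '' A = B) (x : Euc m) :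
    tSpace B (h x) = (tSpace A x).map (h.fderivLinearEquiv x : Euc m →ₗ[ℝ] Euc m) := by
  subst hAB
  refine le_antisymm (fun v hv => ?_) (tSpace_map_fderiv_le (h.differentiable x) A)
  obtain ⟨w, rfl⟩ := (h.fderivLinearEquiv x).surjective v
  have hback := tSpace_map_fderiv_le (h.symm.differentiable (h x)) (h '' A)
  rw [h.symm_image_image, h.symm_apply_apply] at hback
  have hw : w ∈ tSpace A x := by
    simpa only [ContinuousLinearMap.coe_coe, fderivLinearEquiv_apply,
      h.fderiv_symm_apply_fderiv] using hback (Submodule.mem_map_of_mem hv)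
  exact Submodule.mem_map_of_mem hw

end Diffeomorph

end TangentSpace

namespace Channel

variable {m l : ℕ} {Λ Wus Wss : Set (Euc m)} {WuF WsF : Euc m → Set (Euc m)}

def map (ch : Channel m Λ Wus Wss WuF WsF l)
    (h : Euc m ≃ₘ^1⟮𝓘(ℝ, Euc m), 𝓘(ℝ, Euc m)⟯ Euc m)
    (hΛ : h '' Λ = Λ) (hWu : h '' Wus = Wus) (hWs : h '' Wss = Wss)
    (hWuF : ∀ x, h '' WuF x = WuF (h x)) (hWsF : ∀ x, h '' WsF x = WsF (h x)) :
    Channel m Λ Wus Wss WuF WsF l where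
  Γ := h '' ch.Γ
  sub := by
    rintro _ ⟨x, hx, rfl⟩
    exact ⟨hWu ▸ mem_image_of_mem h (ch.sub hx).1, hWs ▸ mem_image_of_mem h (ch.sub hx).2⟩
  dimΓ := by
    rintro _ ⟨x, hx, rfl⟩
    rw [h.tSpace_image rfl, LinearEquiv.finrank_map_eq, ch.dimΓ x hx]
  Ωm := h.toEquiv.conj ch.Ωm
  Ωp := h.toEquiv.conj ch.Ωp
  footm := foot_conj hΛ hWu hWuF ch.footm
  footm_uniq := foot_uniq_conj hΛ hWu hWuF ch.footm_uniq
  footp := foot_conj hΛ hWs hWsF ch.footp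
  footp_uniq := foot_uniq_conj hΛ hWs hWsF ch.footp_uniq
  trans_sum := by
    rintro _ ⟨x, hx, rfl⟩
    rw [h.tSpace_image hWu, h.tSpace_image hWs, ← Submodule.map_sup, ch.trans_sum x hx,
      Submodule.map_top, LinearEquiv.range]
  trans_int := by
    rintro _ ⟨x, hx, rfl⟩
    rw [h.tSpace_image rfl, h.tSpace_image hWu, h.tSpace_image hWs, ch.trans_int x hx,
      Submodule.map_inf _ (LinearEquiv.injective _)]
  fol_s := by
    rintro _ ⟨x, hx, rfl⟩
    rw [h.conj_apply_apply, h.tSpace_image hWs, h.tSpace_image (hWsF _), h.tSpace_image rfl,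
      ← Submodule.map_sup, ch.fol_s x hx]
  fol_s_indep := by
    rintro _ ⟨x, hx, rfl⟩
    rw [h.conj_apply_apply, h.tSpace_image (hWsF _), h.tSpace_image rfl,
      ← Submodule.map_inf _ (LinearEquiv.injective _), ch.fol_s_indep x hx, Submodule.map_bot]
  fol_u := by
    rintro _ ⟨x, hx, rfl⟩
    rw [h.conj_apply_apply, h.tSpace_image hWu, h.tSpace_image (hWuF _), h.tSpace_image rfl,
      ← Submodule.map_sup, ch.fol_u x hx]
  fol_u_indep := by
    rintro _ ⟨x, hx, rfl⟩
    rw [h.conj_apply_apply, h.tSpace_image (hWuF _), h.tSpace_image rfl,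
      ← Submodule.map_inf _ (LinearEquiv.injective _), ch.fol_u_indep x hx, Submodule.map_bot]
  Um := h '' ch.Um
  Up := h '' ch.Up
  hUm := relOpenIn_image_homeomorph h.toHomeomorph hΛ ch.hUm
  hUp := relOpenIn_image_homeomorph h.toHomeomorph hΛ ch.hUp
  bijm := ch.bijm.equiv_conj h.toEquiv
  bijp := ch.bijp.equiv_conj h.toEquiv
  contm := ch.contm.homeomorph_conj h.toHomeomorph
  contp := ch.contp.homeomorph_conj h.toHomeomorph
  continvm := (ch.continvm.homeomorph_conj h.toHomeomorph).congr
    (ch.bijm.invFunOn_conj_eqOn h.toEquiv)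
  continvp := (ch.continvp.homeomorph_conj h.toHomeomorph).congr
    (ch.bijp.invFunOn_conj_eqOn h.toEquiv)

end Channel

namespace FlowNHIM

variable {m : ℕ} (D : FlowNHIM m)

theorem aRate_pos : 0 < D.aRate :=
  D.hb.trans D.hba

theorem flow_neg_flow (s : ℝ) (x : Euc m) : D.Φ (-s) (D.Φ s x) = x := by
  rw [← D.flow_add, neg_add_cancel, D.flow_zero]

theorem flow_flow_neg (s : ℝ) (x : Euc m) : D.Φ s (D.Φ (-s) x) = x := by
  simpa using D.flow_neg_flow (-s) x

theorem contDiff_flow (s : ℝ) : ContDiff ℝ 2 (D.Φ s) :=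
  D.smooth.comp (contDiff_const.prodMk contDiff_id)

theorem continuous_flow_apply (x : Euc m) : Continuous fun t => D.Φ t x :=
  D.smooth.continuous.comp (continuous_id.prodMk continuous_const)

def flowDiffeo (s : ℝ) : Euc m ≃ₘ^1⟮𝓘(ℝ, Euc m), 𝓘(ℝ, Euc m)⟯ Euc m where
  toFun := D.Φ s
  invFun := D.Φ (-s)
  left_inv := D.flow_neg_flow s
  right_inv := D.flow_flow_neg s
  contMDiff_toFun := ((D.contDiff_flow s).of_le one_le_two).contMDiff
  contMDiff_invFun := ((D.contDiff_flow (-s)).of_le one_le_two).contMDiff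

theorem image_flow_eq {A B : Set (Euc m)} {s : ℝ} (h : ∀ y, D.Φ s y ∈ B ↔ y ∈ A) :
    D.Φ s '' A = B := by
  ext y
  rw [← D.flow_flow_neg s y, (LeftInverse.injective (D.flow_neg_flow s)).mem_set_image, h]

theorem flow_mem_Wu_iff (s : ℝ) (y : Euc m) : D.Φ s y ∈ D.Wu ↔ y ∈ D.Wu := by
  simp only [Wu, mem_ofPred_eq, ← D.flow_add]
  exact exists_le_exp_comp_add_iff (g := fun t => infDist (D.Φ t y) D.Λ)
    ((continuous_infDist_pt _).comp (D.continuous_flow_apply y)) D.aRate_pos.le s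

theorem flow_mem_Ws_iff (s : ℝ) (y : Euc m) : D.Φ s y ∈ D.Ws ↔ y ∈ D.Ws := by
  simp only [Ws, mem_ofPred_eq, ← D.flow_add]
  exact exists_le_exp_neg_comp_add_iff (g := fun t => infDist (D.Φ t y) D.Λ)
    ((continuous_infDist_pt _).comp (D.continuous_flow_apply y)) D.aRate_pos.le s

theorem flow_mem_WuF_iff (s : ℝ) (x y : Euc m) : D.Φ s y ∈ D.WuF (D.Φ s x) ↔ y ∈ D.WuF x := by
  simp only [WuF, mem_ofPred_eq, ← D.flow_add]
  exact exists_le_exp_comp_add_iff (g := fun t => dist (D.Φ t y) (D.Φ t x))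
    ((D.continuous_flow_apply y).dist (D.continuous_flow_apply x)) D.aRate_pos.le s

theorem flow_mem_WsF_iff (s : ℝ) (x y : Euc m) : D.Φ s y ∈ D.WsF (D.Φ s x) ↔ y ∈ D.WsF x := by
  simp only [WsF, mem_ofPred_eq, ← D.flow_add]
  exact exists_le_exp_neg_comp_add_iff (g := fun t => dist (D.Φ t y) (D.Φ t x))
    ((D.continuous_flow_apply y).dist (D.continuous_flow_apply x)) D.aRate_pos.le s

def flowChannel (ch : FlowChannel D) (s : ℝ) : FlowChannel D :=
  ch.map (D.flowDiffeo s) (D.invΛ s) (D.image_flow_eq (D.flow_mem_Wu_iff s))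
    (D.image_flow_eq (D.flow_mem_Ws_iff s)) (fun x => D.image_flow_eq (D.flow_mem_WuF_iff s x))
    (fun x => D.image_flow_eq (D.flow_mem_WsF_iff s x))

theorem Ωm_flow (ch ch' : FlowChannel D) (s : ℝ) {x : Euc m} (hx : x ∈ D.Wu) :
    ch'.Ωm (D.Φ s x) = D.Φ s (ch.Ωm x) :=
  foot_map_eq (mapsTo_iff_image_subset.2 (D.invΛ s).subset) (fun y => (D.flow_mem_Wu_iff s y).2)
    (fun z y => (D.flow_mem_WuF_iff s z y).2) ch.footm ch'.footm_uniq hx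

theorem Ωp_flow (ch ch' : FlowChannel D) (s : ℝ) {x : Euc m} (hx : x ∈ D.Ws) :
    ch'.Ωp (D.Φ s x) = D.Φ s (ch.Ωp x) :=
  foot_map_eq (mapsTo_iff_image_subset.2 (D.invΛ s).subset) (fun y => (D.flow_mem_Ws_iff s y).2)
    (fun z y => (D.flow_mem_WsF_iff s z y).2) ch.footp ch'.footp_uniq hx

end FlowNHIM

theorem scattering_map_formula_flow_general {m : ℕ} (D : FlowNHIM m) (ch : FlowChannel D)
    (tu ts : ℝ) :
    (∃ chu : FlowChannel D, chu.Γ = D.Φ (-tu) '' ch.Γ) ∧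
    (∃ chs : FlowChannel D, chs.Γ = D.Φ ts '' ch.Γ) ∧
    (∀ chu chs : FlowChannel D,
      chu.Γ = D.Φ (-tu) '' ch.Γ → chs.Γ = D.Φ ts '' ch.Γ →
      ∀ y ∈ ch.Um,
        ch.S y =
          D.Φ (-ts) (chs.Ωp (D.Φ (ts + tu)
            (Function.invFunOn chu.Ωm chu.Γ (D.Φ (-tu) y))))) := by
  refine ⟨⟨D.flowChannel ch (-tu), rfl⟩, ⟨D.flowChannel ch ts, rfl⟩, ?_⟩
  intro chu chs hΓu hΓs y hy
  obtain ⟨x, hx, rfl⟩ := ch.bijm.surjOn hy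
  have hxu : D.Φ (-tu) x ∈ chu.Γ := hΓu ▸ mem_image_of_mem _ hx
  rw [Channel.S, ch.bijm.injOn.leftInvOn_invFunOn hx, ← D.Ωm_flow ch chu (-tu) (ch.sub hx).1,
    chu.bijm.injOn.leftInvOn_invFunOn hxu, ← D.flow_add, add_neg_cancel_right,
    D.Ωp_flow ch chs ts (ch.sub hx).2, D.flow_neg_flow]

/-- **Iterated homoclinic channels and the explicit formula for the scattering map of a
flow.**  Let `Λ` be a normally hyperbolic invariant manifold for the flow `Φ` and `Γ` a
homoclinic channel with scattering map `S^Γ`.  Then for any `t_u, t_s > 0` the sets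
`Φ^{-t_u}(Γ)` and `Φ^{t_s}(Γ)` are also homoclinic channels, and
`S^Γ = Φ^{-t_s} ∘ Ω₊^{Φ^{t_s}(Γ)} ∘ Φ^{t_s+t_u} ∘ (Ω₋^{Φ^{-t_u}(Γ)})⁻¹ ∘ Φ^{-t_u}` on
`U₋ = Ω₋^Γ(Γ)`. -/
theorem scattering_map_formula_flow {m : ℕ} (D : FlowNHIM m) (ch : FlowChannel D)
    (tu ts : ℝ) (htu : 0 < tu) (hts : 0 < ts) :
    (∃ chu : FlowChannel D, chu.Γ = D.Φ (-tu) '' ch.Γ) ∧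
    (∃ chs : FlowChannel D, chs.Γ = D.Φ ts '' ch.Γ) ∧
    (∀ chu chs : FlowChannel D,
      chu.Γ = D.Φ (-tu) '' ch.Γ → chs.Γ = D.Φ ts '' ch.Γ →
      ∀ y ∈ ch.Um,
        ch.S y =
          D.Φ (-ts) (chs.Ωp (D.Φ (ts + tu)
            (Function.invFunOn chu.Ωm chu.Γ (D.Φ (-tu) y))))) :=
  scattering_map_formula_flow_general D ch tu ts
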